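/- (Weigel) Let G be a group and p a prime. If every subgroup of finite index in G belongs to the class 𝒢(p), then G belongs to the class 𝒢*(p). -/

import Mathlib

/-!
Common definitions for formalizing "Cohomology and profinite topologies for solvable
groups of finite rank" (K. Lorensen).

Group cohomology is defined via inhomogeneous cochains.  The continuous cohomology of the
pro-`p` (resp. profinite) completion of `G` with coefficients in a finite discrete module is
the direct limit, over the normal subgroups `N` of finite `p`-power (resp. finite) index
acting trivially on the module, of the cohomology of the quotients `G ⧸ N`; accordingly, the
statement that the completion map induces an isomorphism on cohomology is rendered as:
the canonical (inflation) maps from this directed system to `H^*(G, M)` are jointly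
surjective, and any class of the system killed in `H^*(G, M)` is killed at a deeper level of
the system.
-/

open Function TensorProduct

universe u v

namespace GoodProfinite

variable {G H : Type u} {M : Type v}

/-- The differential on inhomogeneous cochains of a group `G` with coefficients in a
`G`-module `M` (the action given by `ρ : G →* AddAut M`). -/
def cochainD [Group G] [AddCommGroup M] (ρ : G →* Multiplicative (AddAut M)) (n : ℕ) :
    ((Fin n → G) → M) →+ ((Fin (n + 1) → G) → M) :=
  AddMonoidHom.mk'
    (fun f g =>
      Multiplicative.toAdd (ρ (g 0)) (f fun i => g i.succ) +
        ∑ j : Fin (n + 1), (-1 : ℤ) ^ ((j : ℕ) + 1) • f (Fin.contractNth j (· * ·) g))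
    (by
      intro a b
      funext g
      simp only [Pi.add_apply, map_add, smul_add, Finset.sum_add_distrib]
      abel)

/-- The `n`-cocycles. -/
def cocycleGroup [Group G] [AddCommGroup M] (ρ : G →* Multiplicative (AddAut M)) (n : ℕ) :
    AddSubgroup ((Fin n → G) → M) :=
  (cochainD ρ n).ker

/-- The `n`-coboundaries. -/
def coboundaryGroup [Group G] [AddCommGroup M] (ρ : G →* Multiplicative (AddAut M)) :
    (n : ℕ) → AddSubgroup ((Fin n → G) → M)
  | 0 => ⊥
  | n + 1 => (cochainD ρ n).range

/-- The `n`-th group cohomology of `G` with coefficients in the `G`-module `M`. -/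
def groupCoh [Group G] [AddCommGroup M] (ρ : G →* Multiplicative (AddAut M)) (n : ℕ) : Type (max u v) :=
  cocycleGroup ρ n ⧸ (coboundaryGroup ρ n).addSubgroupOf (cocycleGroup ρ n)

instance [Group G] [AddCommGroup M] (ρ : G →* Multiplicative (AddAut M)) (n : ℕ) :
    AddCommGroup (groupCoh ρ n) :=
  inferInstanceAs (AddCommGroup (_ ⧸ _))

/-- Precomposition of cochains with a group homomorphism. -/
def precompCochain [Group G] [Group H] [AddCommGroup M] (f : G →* H) (n : ℕ) :
    ((Fin n → H) → M) →+ ((Fin n → G) → M) :=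
  AddMonoidHom.mk' (fun c g => c fun i => f (g i)) (fun _ _ => rfl)

lemma comp_contractNth [Group G] [Group H] (f : G →* H) {n : ℕ} (j : Fin (n + 1))
    (g : Fin (n + 1) → G) :
    (fun k => f (Fin.contractNth j (· * ·) g k)) =
      Fin.contractNth j (· * ·) fun i => f (g i) := by
  funext k
  unfold Fin.contractNth
  split_ifs <;> simp [map_mul]

lemma cochainD_precomp [Group G] [Group H] [AddCommGroup M] (f : G →* H)
    (ρ : H →* Multiplicative (AddAut M)) (ρ' : G →* Multiplicative (AddAut M)) (hcomp : ∀ g, ρ' g = ρ (f g)) (n : ℕ)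
    (c : (Fin n → H) → M) :
    cochainD ρ' n (precompCochain f n c) = precompCochain f (n + 1) (cochainD ρ n c) := by
  funext g
  show Multiplicative.toAdd (ρ' (g 0)) (c fun i => f (g i.succ)) +
      ∑ j : Fin (n + 1), (-1 : ℤ) ^ ((j : ℕ) + 1) •
        c (fun i => f (Fin.contractNth j (· * ·) g i)) =
    Multiplicative.toAdd (ρ (f (g 0))) (c fun i => f (g i.succ)) +
      ∑ j : Fin (n + 1), (-1 : ℤ) ^ ((j : ℕ) + 1) •
        c (Fin.contractNth j (· * ·) fun i => f (g i))
  rw [hcomp]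
  congr 1
  refine Finset.sum_congr rfl fun j _ => ?_
  rw [comp_contractNth]

/-- The map on cocycles induced by a group homomorphism with compatible actions. -/
def cocycleMap [Group G] [Group H] [AddCommGroup M] (f : G →* H) (ρ : H →* Multiplicative (AddAut M))
    (ρ' : G →* Multiplicative (AddAut M)) (hcomp : ∀ g, ρ' g = ρ (f g)) (n : ℕ) :
    cocycleGroup ρ n →+ cocycleGroup ρ' n :=
  AddMonoidHom.codRestrict ((precompCochain f n).comp (cocycleGroup ρ n).subtype) _
    (fun x => by
      have hx : cochainD ρ n x.1 = 0 := x.2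
      show precompCochain f n x.1 ∈ (cochainD ρ' n).ker
      rw [AddMonoidHom.mem_ker, cochainD_precomp f ρ ρ' hcomp, hx, map_zero])

/-- The map `H^n(H, M) → H^n(G, M)` on group cohomology induced by a group homomorphism
`f : G →* H` and compatible actions (`ρ' = ρ ∘ f`); e.g. inflation maps. -/
def cohMap [Group G] [Group H] [AddCommGroup M] (f : G →* H) (ρ : H →* Multiplicative (AddAut M))
    (ρ' : G →* Multiplicative (AddAut M)) (hcomp : ∀ g, ρ' g = ρ (f g)) (n : ℕ) :
    groupCoh ρ n →+ groupCoh ρ' n :=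
  QuotientAddGroup.map _ _ (cocycleMap f ρ ρ' hcomp n)
    (by
      intro x hx
      rw [AddSubgroup.mem_addSubgroupOf] at hx
      rw [AddSubgroup.mem_comap, AddSubgroup.mem_addSubgroupOf]
      match n, x, hx with
      | 0, x, hx =>
          have : x.1 = 0 := hx
          show (precompCochain f 0) x.1 ∈ (⊥ : AddSubgroup _)
          rw [this, map_zero]
          exact AddSubgroup.mem_bot.mpr rfl
      | (m + 1), x, hx =>
          obtain ⟨b, hb⟩ := hx
          show (precompCochain f (m + 1)) x.1 ∈ (cochainD ρ' m).range
          exact ⟨precompCochain f m b, by rw [cochainD_precomp f ρ ρ' hcomp, hb]⟩)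

/-- The action of `G ⧸ N` on `M` induced by an action of `G` on which `N` acts trivially. -/
def quotAut [Group G] [AddCommGroup M] (ρ : G →* Multiplicative (AddAut M)) (N : Subgroup G) [N.Normal]
    (h : ∀ x ∈ N, ρ x = 1) : G ⧸ N →* Multiplicative (AddAut M) :=
  QuotientGroup.lift N ρ h

/-- The natural projection `G ⧸ N' →* G ⧸ N` when `N' ≤ N`. -/
def quotMapHom [Group G] (N N' : Subgroup G) [N.Normal] [N'.Normal] (hle : N' ≤ N) :
    G ⧸ N' →* G ⧸ N :=
  QuotientGroup.map N' N (MonoidHom.id G) fun _ hx => hle hx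

lemma quotAut_comp_quotMap [Group G] [AddCommGroup M] (ρ : G →* Multiplicative (AddAut M))
    (N N' : Subgroup G) [N.Normal] [N'.Normal] (hle : N' ≤ N) (h : ∀ x ∈ N, ρ x = 1) :
    ∀ x : G ⧸ N', quotAut ρ N' (fun g hg => h g (hle hg)) x =
      quotAut ρ N h (quotMapHom N N' hle x) := fun x =>
  QuotientGroup.induction_on x fun _ => rfl

/-- The canonical map from the continuous cohomology of the pro-`p` completion of `G`
(the direct limit over normal subgroups of finite `p`-power index acting trivially on `M`
of the cohomology of the corresponding quotients) to `H^*(G, M)` is an isomorphism in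
every degree. -/
def ProPCompletionCohIso (p : ℕ) (G : Type u) [Group G] (M : Type v) [AddCommGroup M]
    (ρ : G →* Multiplicative (AddAut M)) : Prop :=
  ∀ n : ℕ,
    (∀ x : groupCoh ρ n,
      ∃ (N : Subgroup G) (hN : N.Normal),
        haveI := hN
        ∃ (_ : ∃ k, N.index = p ^ k) (h1 : ∀ y ∈ N, ρ y = 1)
          (z : groupCoh (quotAut ρ N h1) n),
          cohMap (QuotientGroup.mk' N) (quotAut ρ N h1) ρ (fun _ => rfl) n z = x) ∧
    (∀ (N : Subgroup G) (hN : N.Normal),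
      haveI := hN
      ∀ (_ : ∃ k, N.index = p ^ k) (h1 : ∀ y ∈ N, ρ y = 1)
        (z : groupCoh (quotAut ρ N h1) n),
        cohMap (QuotientGroup.mk' N) (quotAut ρ N h1) ρ (fun _ => rfl) n z = 0 →
        ∃ (N' : Subgroup G) (hN' : N'.Normal),
          haveI := hN'
          ∃ (_ : ∃ k, N'.index = p ^ k) (hle : N' ≤ N),
            cohMap (quotMapHom N N' hle) (quotAut ρ N h1)
              (quotAut ρ N' fun g hg => h1 g (hle hg))
              (quotAut_comp_quotMap ρ N N' hle h1) n z = 0)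

/-- The analogue of `ProPCompletionCohIso` for the full profinite completion: the canonical
map from the continuous cohomology of the profinite completion of `G` to `H^*(G, M)` is an
isomorphism in every degree. -/
def ProfiniteCompletionCohIso (G : Type u) [Group G] (M : Type v) [AddCommGroup M]
    (ρ : G →* Multiplicative (AddAut M)) : Prop :=
  ∀ n : ℕ,
    (∀ x : groupCoh ρ n,
      ∃ (N : Subgroup G) (hN : N.Normal),
        haveI := hN
        ∃ (_ : N.FiniteIndex) (h1 : ∀ y ∈ N, ρ y = 1)
          (z : groupCoh (quotAut ρ N h1) n),
          cohMap (QuotientGroup.mk' N) (quotAut ρ N h1) ρ (fun _ => rfl) n z = x) ∧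
    (∀ (N : Subgroup G) (hN : N.Normal),
      haveI := hN
      ∀ (_ : N.FiniteIndex) (h1 : ∀ y ∈ N, ρ y = 1)
        (z : groupCoh (quotAut ρ N h1) n),
        cohMap (QuotientGroup.mk' N) (quotAut ρ N h1) ρ (fun _ => rfl) n z = 0 →
        ∃ (N' : Subgroup G) (hN' : N'.Normal),
          haveI := hN'
          ∃ (_ : N'.FiniteIndex) (hle : N' ≤ N),
            cohMap (quotMapHom N N' hle) (quotAut ρ N h1)
              (quotAut ρ N' fun g hg => h1 g (hle hg))
              (quotAut_comp_quotMap ρ N N' hle h1) n z = 0)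

/-- The class `𝒢(p)`: the pro-`p` completion map `G → Ĝ_p` induces an isomorphism
`H^*(Ĝ_p, M) → H^*(G, M)` for every discrete `Ĝ_p`-module `M` of finite `p`-power order,
i.e. for every `G`-module `M` of finite `p`-power order whose action factors through a
quotient of finite `p`-power index. -/
def InGp (p : ℕ) (G : Type u) [Group G] : Prop :=
  ∀ (M : Type u) [AddCommGroup M] (ρ : G →* Multiplicative (AddAut M)),
    (∃ k, Nat.card M = p ^ k) →
    (∃ N : Subgroup G, N.Normal ∧ (∃ k, N.index = p ^ k) ∧ ∀ y ∈ N, ρ y = 1) →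
    ProPCompletionCohIso p G M ρ

/-- The class `𝒢*(p)`: the profinite completion map `G → Ĝ` induces an isomorphism
`H^*(Ĝ, M) → H^*(G, M)` for every discrete `Ĝ`-module `M` of finite `p`-power order,
i.e. for every `G`-module `M` of finite `p`-power order whose action factors through a
quotient of finite index. -/
def InGpStar (p : ℕ) (G : Type u) [Group G] : Prop :=
  ∀ (M : Type u) [AddCommGroup M] (ρ : G →* Multiplicative (AddAut M)),
    (∃ k, Nat.card M = p ^ k) →
    (∃ N : Subgroup G, N.Normal ∧ N.FiniteIndex ∧ ∀ y ∈ N, ρ y = 1) →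
    ProfiniteCompletionCohIso G M ρ

/-- The class `ℱ𝒮`: groups having only finitely many subgroups of each finite index. -/
def InFS (G : Type u) [Group G] : Prop :=
  ∀ n : ℕ, n ≠ 0 → {H : Subgroup G | H.index = n}.Finite

/-- The class `ℱℋ`: groups `G` such that `H^n(G, M)` is finite for every finite
`G`-module `M` and every `n ≥ 0`. -/
def InFH (G : Type u) [Group G] : Prop :=
  ∀ (M : Type u) [AddCommGroup M] [Finite M] (ρ : G →* Multiplicative (AddAut M)) (n : ℕ),
    Finite (groupCoh ρ n)

/-- An abelian group has finite torsion-free rank iff `ℚ ⊗ A` is finite dimensional. -/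
def HasFiniteTorsionFreeRank (A : Type v) [CommGroup A] : Prop :=
  Module.Finite ℚ (ℚ ⊗[ℤ] (Additive A))

/-- An abelian group has finite `p`-rank (its `p`-torsion subgroup is a direct sum of
finitely many cyclic and quasicyclic groups) iff its `p`-socle is finite. -/
def HasFinitePRank (p : ℕ) (A : Type v) [CommGroup A] : Prop :=
  {a : A | a ^ p = 1}.Finite

/-- `G` has finite abelian section rank: every abelian section of `G` has finite
torsion-free rank and finite `p`-rank for every prime `p`. -/
def IsFAR (G : Type u) [Group G] : Prop :=
  ∀ (H : Subgroup G) (A : Type u) [CommGroup A] (φ : H →* A), Surjective φ →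
    HasFiniteTorsionFreeRank A ∧ ∀ p : ℕ, p.Prime → HasFinitePRank p A

/-- The Prüfer `p`-group `C_{p^∞}`: the subgroup of `p`-power order elements of `ℚ/ℤ`. -/
def pruferSubgroup (p : ℕ) : AddSubgroup (AddCircle (1 : ℚ)) where
  carrier := {x | ∃ n : ℕ, p ^ n • x = 0}
  zero_mem' := ⟨0, smul_zero _⟩
  add_mem' := by
    rintro a b ⟨m, hm⟩ ⟨n, hn⟩
    refine ⟨m + n, ?_⟩
    have ha : p ^ (m + n) • a = 0 := by rw [pow_add, mul_comm, mul_smul, hm, smul_zero]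
    have hb : p ^ (m + n) • b = 0 := by rw [pow_add, mul_smul, hn, smul_zero]
    rw [smul_add, ha, hb, add_zero]
  neg_mem' := by
    rintro a ⟨m, hm⟩
    exact ⟨m, by rw [smul_neg, hm, neg_zero]⟩

/-- `G` has a subgroup isomorphic to the Prüfer `p`-group `C_{p^∞}`. -/
def HasPruferSubgroup (p : ℕ) (G : Type u) [Group G] : Prop :=
  ∃ H : Subgroup G, Nonempty (H ≃* Multiplicative (pruferSubgroup p))

/-- `G` has a section (quotient of a subgroup) isomorphic to the Prüfer `p`-group, i.e.
`p ∈ spec G`. -/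
def HasPruferSection (p : ℕ) (G : Type u) [Group G] : Prop :=
  ∃ (H : Subgroup G) (φ : H →* Multiplicative (pruferSubgroup p)), Surjective φ

/-- `H ≤_t G`: `H` is topologically embedded in `G`, i.e. the profinite topology of `G`
induces the full profinite topology on `H`. -/
def TopEmbedded {G : Type u} [Group G] (H : Subgroup G) : Prop :=
  ∀ K : Subgroup H, K.Normal → K.FiniteIndex →
    ∃ L : Subgroup G, L.Normal ∧ L.FiniteIndex ∧ L.subgroupOf H ≤ K

/-- `H ≤_{t(p)} G`: `H` is topologically `p`-embedded in `G`, i.e. the pro-`p` topology of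
`G` induces the full pro-`p` topology on `H`. -/
def TopPEmbedded (p : ℕ) {G : Type u} [Group G] (H : Subgroup G) : Prop :=
  ∀ K : Subgroup H, K.Normal → (∃ k, K.index = p ^ k) →
    ∃ L : Subgroup G, L.Normal ∧ (∃ k, L.index = p ^ k) ∧ L.subgroupOf H ≤ K

/-- The pro-`p` topology on `G` is homogeneous: every subgroup of `G` is topologically
`p`-embedded in `G`. -/
def PHomogeneous (p : ℕ) (G : Type u) [Group G] : Prop :=
  ∀ H : Subgroup G, TopPEmbedded p H

/-- The `p`-residual of `G`: the kernel of the pro-`p` completion map, i.e. the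
intersection of all normal subgroups of finite `p`-power index. -/
def pResidual (p : ℕ) (G : Type u) [Group G] : Subgroup G :=
  ⨅ (N : Subgroup G) (_ : N.Normal) (_ : ∃ k, N.index = p ^ k), N

/-- A `p'`-group: every element has finite order coprime to `p`. -/
def IsPPrimeGroup (p : ℕ) (G : Type u) [Group G] : Prop :=
  ∀ g : G, IsOfFinOrder g ∧ Nat.Coprime (orderOf g) p

/-- The profinite topology on `G`, with the cosets of the normal subgroups of finite index
as basic open sets. -/
def profiniteTopology (G : Type u) [Group G] : TopologicalSpace G :=
  ⨅ (N : Subgroup G) (_ : N.Normal) (_ : N.FiniteIndex),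
    TopologicalSpace.induced (QuotientGroup.mk (s := N)) ⊥

lemma normal_of_le_center {G : Type u} [Group G] {A : Subgroup G}
    (hA : A ≤ Subgroup.center G) : A.Normal :=
  ⟨fun a ha g => by
    have hc := (Subgroup.mem_center_iff.mp (hA ha)) g
    have : g * a * g⁻¹ = a := by rw [hc]; group
    rwa [this]⟩

/-!
Let `M` be a module of `p`-power order on which a normal subgroup `N` of finite index acts
trivially. The preimage `H` of a Sylow `p`-subgroup of `G ⧸ N` has index prime to `p`, and
`N ⊓ H` has `p`-power index in `H`, so `H ∈ 𝒢(p)` describes `H^*(H, M)` through finite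
`p`-quotients of `H`. Corestriction carries this back to `G`: `cores ∘ res` is multiplication by
`[G : H]`, which is invertible on the `p`-torsion group `H^*(G, M)`, and corestriction commutes
with inflation from the finite quotients `H ⧸ (N₀ ⊓ H) → G ⧸ N₀`.

Corestriction along `Δ → Γ` is the norm `f ↦ ∑ᵢ tᵢ • f (tᵢ⁻¹ • ·)` on homogeneous cochains,
after pulling back along a `Δ`-equivariant retraction `Γ → Δ`; the prism homotopy between the
identity of `Γ` and this retraction shows that `cores ∘ res = [Γ : Δ]`.
-/

instance {M : Type*} [AddCommGroup M] : CoeFun (Multiplicative (AddAut M)) (fun _ => M → M) :=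
  ⟨fun a => ⇑(Multiplicative.toAdd a : AddAut M)⟩

lemma act_mul {Γ : Type*} [Group Γ] [AddCommGroup M] (ρ : Γ →* Multiplicative (AddAut M))
    (g h : Γ) (m : M) : ρ (g * h) m = ρ g (ρ h m) := by
  rw [map_mul]; rfl

lemma map_partialProd {Γ Γ' : Type*} [Group Γ] [Group Γ'] (π : Γ →* Γ') {n : ℕ}
    (g : Fin n → Γ) : Fin.partialProd (π ∘ g) = π ∘ Fin.partialProd g := by
  funext k
  induction k using Fin.induction with
  | zero => simp
  | succ i ih => simp_all [Fin.partialProd_succ]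

section Face

variable {X : Type*}

/-- Indexed by `ℕ` rather than `Fin`, so that the simplicial identities below are arithmetic
on `ℕ`. -/
def face {n : ℕ} (i : ℕ) (x : Fin (n + 1) → X) : Fin n → X :=
  fun j => if j.1 < i then x j.castSucc else x j.succ

lemma face_eq_comp_succAbove {n : ℕ} (i : Fin (n + 1)) (x : Fin (n + 1) → X) :
    face i x = x ∘ i.succAbove := by
  funext j
  simp only [face, Function.comp_apply, Fin.succAbove, Fin.lt_def, Fin.val_castSucc]
  split_ifs <;> rfl

lemma face_zero {n : ℕ} (x : Fin (n + 1) → X) : face 0 x = x ∘ Fin.succ := by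
  funext j; simp [face]

lemma face_comp {Y : Type*} (φ : X → Y) {n : ℕ} (i : ℕ) (x : Fin (n + 1) → X) :
    face i (φ ∘ x) = φ ∘ face i x := by
  funext j; simp only [face, Function.comp_apply]; split_ifs <;> rfl

lemma face_smul {Γ : Type*} [Group Γ] (g : Γ) {n : ℕ} (i : ℕ) (x : Fin (n + 1) → Γ) :
    face i (g • x) = g • face i x :=
  face_comp (g • ·) i x

end Face

section HomogeneousCochains

variable [AddCommGroup M]

def homogeneousD {X : Type*} (n : ℕ) : ((Fin n → X) → M) →+ ((Fin (n + 1) → X) → M) :=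
  AddMonoidHom.mk' (fun F x => ∑ i ∈ Finset.range (n + 1), (-1 : ℤ) ^ i • F (face i x))
    (fun F F' => by funext x; simp [Finset.sum_add_distrib])

lemma homogeneousD_apply {X : Type*} {n : ℕ} (F : (Fin n → X) → M) (x : Fin (n + 1) → X) :
    homogeneousD n F x = ∑ i ∈ Finset.range (n + 1), (-1 : ℤ) ^ i • F (face i x) :=
  rfl

def comapCochain {X Y : Type*} (φ : X → Y) (n : ℕ) : ((Fin n → Y) → M) →+ ((Fin n → X) → M) :=
  AddMonoidHom.mk' (fun F x => F (φ ∘ x)) (fun _ _ => rfl)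

lemma comapCochain_comapCochain {X Y Z : Type*} (φ : X → Y) (ψ : Y → Z) {n : ℕ}
    (F : (Fin n → Z) → M) :
    comapCochain φ n (comapCochain ψ n F) = comapCochain (ψ ∘ φ) n F :=
  rfl

lemma homogeneousD_comapCochain {X Y : Type*} (φ : X → Y) {n : ℕ} (F : (Fin n → Y) → M) :
    homogeneousD n (comapCochain φ n F) = comapCochain φ (n + 1) (homogeneousD n F) := by
  funext x
  simp only [homogeneousD_apply, comapCochain, AddMonoidHom.mk'_apply, face_comp]

variable {Γ Δ : Type*} [Group Γ] [Group Δ]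

def IsEquivariant (j : Δ →* Γ) (σ : Δ →* Multiplicative (AddAut M)) {n : ℕ}
    (f : (Fin n → Γ) → M) : Prop :=
  ∀ (δ : Δ) (x : Fin n → Γ), f (j δ • x) = σ δ (f x)

namespace IsEquivariant

variable {j : Δ →* Γ} {σ : Δ →* Multiplicative (AddAut M)} {n : ℕ}

lemma map_smul {ρ : Γ →* Multiplicative (AddAut M)} {f : (Fin n → Γ) → M}
    (hf : IsEquivariant (MonoidHom.id Γ) ρ f) (g : Γ) (x : Fin n → Γ) : f (g • x) = ρ g (f x) :=
  hf g x

lemma of_id {ρ : Γ →* Multiplicative (AddAut M)} (hcomp : ∀ δ, σ δ = ρ (j δ))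
    {f : (Fin n → Γ) → M} (hf : IsEquivariant (MonoidHom.id Γ) ρ f) : IsEquivariant j σ f :=
  fun δ x => by rw [hf.map_smul, hcomp]

lemma homogeneousD {f : (Fin n → Γ) → M} (hf : IsEquivariant j σ f) :
    IsEquivariant j σ (homogeneousD n f) := by
  intro δ x
  simp only [homogeneousD_apply, map_sum, map_zsmul]
  exact Finset.sum_congr rfl fun i _ => by rw [face_smul, hf]

lemma comapCochain {κ : Γ → Δ} (hκ : ∀ δ g, κ (j δ * g) = δ * κ g) {f : (Fin n → Δ) → M}
    (hf : IsEquivariant (MonoidHom.id Δ) σ f) : IsEquivariant j σ (comapCochain κ n f) := by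
  intro δ x
  have hx : κ ∘ (j δ • x) = δ • (κ ∘ x) := funext fun k => hκ δ (x k)
  simp only [GoodProfinite.comapCochain, AddMonoidHom.mk'_apply, hx, hf.map_smul]

end IsEquivariant

variable (ρ : Γ →* Multiplicative (AddAut M))

def homogenize (n : ℕ) : ((Fin n → Γ) → M) →+ ((Fin (n + 1) → Γ) → M) :=
  AddMonoidHom.mk' (fun c x => ρ (x 0) (c fun i => (x i.castSucc)⁻¹ * x i.succ))
    (fun c c' => by funext x; exact map_add _ _ _)

def dehomogenize (n : ℕ) : ((Fin (n + 1) → Γ) → M) →+ ((Fin n → Γ) → M) :=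
  AddMonoidHom.mk' (fun f g => f (Fin.partialProd g)) (fun _ _ => rfl)

variable {ρ}

lemma dehomogenize_homogenize {n : ℕ} (c : (Fin n → Γ) → M) :
    dehomogenize n (homogenize ρ n c) = c := by
  funext g
  simp only [dehomogenize, homogenize, AddMonoidHom.mk'_apply, Fin.partialProd_zero, map_one,
    Fin.partialProd_right_inv]
  rfl

lemma isEquivariant_homogenize {n : ℕ} (c : (Fin n → Γ) → M) :
    IsEquivariant (MonoidHom.id Γ) ρ (homogenize ρ n c) := by
  intro g x
  show ρ (g * x 0) _ = ρ g (ρ (x 0) _)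
  simp only [Pi.smul_apply, smul_eq_mul, mul_inv_rev, mul_assoc, inv_mul_cancel_left, act_mul]

lemma homogenize_dehomogenize {n : ℕ} {f : (Fin (n + 1) → Γ) → M}
    (hf : IsEquivariant (MonoidHom.id Γ) ρ f) : homogenize ρ n (dehomogenize n f) = f := by
  funext x
  have hx : x = x 0 • Fin.partialProd fun i : Fin n => (x i.castSucc)⁻¹ * x i.succ :=
    (Fin.partialProd_left_inv x).symm
  conv_rhs => rw [hx, hf.map_smul]
  rfl

lemma cochainD_dehomogenize {n : ℕ} {f : (Fin (n + 1) → Γ) → M}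
    (hf : IsEquivariant (MonoidHom.id Γ) ρ f) :
    cochainD ρ n (dehomogenize n f) = dehomogenize (n + 1) (homogeneousD (n + 1) f) := by
  funext g
  have h0 : face 0 (Fin.partialProd g) = g 0 • Fin.partialProd (Fin.tail g) := by
    rw [face_zero]
    funext k
    simp [Fin.partialProd_succ']
  have hsucc : ∀ j : Fin (n + 1), face (j + 1) (Fin.partialProd g) =
      Fin.partialProd (Fin.contractNth j (· * ·) g) := by
    intro j
    rw [Fin.partialProd_contractNth, ← face_eq_comp_succAbove, Fin.val_succ]
  simp only [cochainD, dehomogenize, homogeneousD_apply, AddMonoidHom.mk'_apply]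
  rw [Finset.sum_range_succ', ← Fin.sum_univ_eq_sum_range, add_comm, pow_zero, one_smul, h0,
    hf.map_smul]
  simp only [hsucc]
  rfl

lemma homogenize_cochainD {n : ℕ} (c : (Fin n → Γ) → M) :
    homogenize ρ (n + 1) (cochainD ρ n c) = homogeneousD (n + 1) (homogenize ρ n c) := by
  have h := isEquivariant_homogenize (ρ := ρ) c
  conv_lhs => rw [← dehomogenize_homogenize (ρ := ρ) c, cochainD_dehomogenize h]
  exact homogenize_dehomogenize h.homogeneousD

end HomogeneousCochains

section Precomposition

variable [AddCommGroup M] {Γ Δ : Type u} [Group Γ] [Group Δ]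

lemma homogenize_precompCochain {ρ : Γ →* Multiplicative (AddAut M)}
    {σ : Δ →* Multiplicative (AddAut M)} {j : Δ →* Γ} (hcomp : ∀ δ, σ δ = ρ (j δ)) {n : ℕ}
    (c : (Fin n → Γ) → M) :
    homogenize σ n (precompCochain j n c) = comapCochain j (n + 1) (homogenize ρ n c) := by
  funext x
  simp only [homogenize, precompCochain, comapCochain, AddMonoidHom.mk'_apply, hcomp,
    Function.comp_apply, map_mul, map_inv]

lemma dehomogenize_comapCochain (π : Δ →* Γ) {n : ℕ} (F : (Fin (n + 1) → Γ) → M) :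
    dehomogenize n (comapCochain π (n + 1) F) = precompCochain π n (dehomogenize n F) := by
  funext g
  simp only [dehomogenize, comapCochain, precompCochain, AddMonoidHom.mk'_apply]
  rw [← map_partialProd]
  rfl

end Precomposition

lemma sum_range_sum_lt_add_sum_gt {A : Type*} [AddCommMonoid A] (a : ℕ → ℕ → A) (m : ℕ) :
    ∑ l ∈ Finset.range (m + 1), ∑ i ∈ Finset.range l, a (l - 1) i +
      ∑ l ∈ Finset.range (m + 1), ∑ i ∈ Finset.Ico (l + 1) (m + 1), a l i =
    ∑ i ∈ Finset.range (m + 1), ∑ l ∈ Finset.range m, a l i := by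
  rw [Finset.sum_range_succ', Finset.sum_range_succ (fun l => ∑ i ∈ Finset.Ico _ _, _)]
  simp only [Finset.range_zero, Finset.sum_empty, add_zero, Finset.Ico_self, Nat.add_sub_cancel,
    ← Finset.sum_add_distrib]
  rw [Finset.sum_comm]
  refine Finset.sum_congr rfl fun l hl => ?_
  rw [Finset.range_eq_Ico, Finset.range_eq_Ico,
    Finset.sum_Ico_consecutive _ (Nat.zero_le _) (by simp at hl; omega)]

section Prism

variable [AddCommGroup M] {X Y : Type*} (α β : X → Y)

/-- `(α x₀, …, α xₗ, β xₗ, …, β xₙ)`, the `l`-th simplex of the prism between `α` and `β`. -/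
def prismSimplex {n : ℕ} (l : ℕ) (x : Fin (n + 1) → X) : Fin (n + 2) → Y :=
  fun j => if j.1 ≤ l then α (x ⟨min j.1 n, by omega⟩) else β (x ⟨j.1 - 1, by omega⟩)

def splice {n : ℕ} (t : ℕ) (x : Fin (n + 1) → X) : Fin (n + 1) → Y :=
  fun j => if j.1 < t then α (x j) else β (x j)

def prismOp (n : ℕ) : ((Fin (n + 2) → Y) → M) →+ ((Fin (n + 1) → X) → M) :=
  AddMonoidHom.mk'
    (fun F x => ∑ l ∈ Finset.range (n + 1), (-1 : ℤ) ^ l • F (prismSimplex α β l x))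
    (fun F F' => by funext x; simp [Finset.sum_add_distrib])

lemma prismOp_apply {n : ℕ} (F : (Fin (n + 2) → Y) → M) (x : Fin (n + 1) → X) :
    prismOp α β n F x = ∑ l ∈ Finset.range (n + 1), (-1 : ℤ) ^ l • F (prismSimplex α β l x) :=
  rfl

variable {α β} {n : ℕ}

lemma splice_zero (x : Fin (n + 1) → X) : splice α β 0 x = β ∘ x := by
  funext j; simp [splice]

lemma splice_of_le (x : Fin (n + 1) → X) {t : ℕ} (ht : n + 1 ≤ t) : splice α β t x = α ∘ x := by
  funext j; simp [splice, show j.1 < t by omega]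

section Faces

variable {i l : ℕ} (x : Fin (n + 2) → X)

lemma face_prismSimplex_of_lt (hi : i < l) (hl : l ≤ n + 1) :
    face i (prismSimplex α β l x) = prismSimplex α β (l - 1) (face i x) := by
  funext ⟨j, hj⟩
  simp only [face, prismSimplex, Fin.val_castSucc, Fin.val_succ]
  split_ifs <;> first | omega | rfl | (congr 2; ext; simp; try omega)

lemma face_prismSimplex_of_gt (hi : l + 1 < i) (hi' : i ≤ n + 2) :
    face i (prismSimplex α β l x) = prismSimplex α β l (face (i - 1) x) := by
  funext ⟨j, hj⟩
  simp only [face, prismSimplex, Fin.val_castSucc, Fin.val_succ]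
  split_ifs <;> first | omega | rfl | (congr 2; ext; simp; try omega)

lemma face_prismSimplex_self : face l (prismSimplex α β l x) = splice α β l x := by
  funext ⟨j, hj⟩
  simp only [face, prismSimplex, splice, Fin.val_castSucc, Fin.val_succ]
  split_ifs <;> first | omega | rfl | (congr 2; ext; simp; try omega)

lemma face_succ_prismSimplex : face (l + 1) (prismSimplex α β l x) = splice α β (l + 1) x := by
  funext ⟨j, hj⟩
  simp only [face, prismSimplex, splice, Fin.val_castSucc, Fin.val_succ]
  split_ifs <;> first | omega | rfl | (congr 2; ext; simp; try omega)

end Faces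

lemma neg_one_pow_smul_homogeneousD_prismSimplex (F : (Fin (n + 2) → Y) → M)
    (x : Fin (n + 2) → X) {l : ℕ} (hl : l ≤ n + 1) :
    (-1 : ℤ) ^ l • homogeneousD (n + 2) F (prismSimplex α β l x) =
      F (splice α β l x) - F (splice α β (l + 1) x) -
        ∑ i ∈ Finset.range l, (-1 : ℤ) ^ (i + (l - 1)) • F (prismSimplex α β (l - 1) (face i x)) -
        ∑ i ∈ Finset.Ico (l + 1) (n + 2),
          (-1 : ℤ) ^ (i + l) • F (prismSimplex α β l (face i x)) := by
  have hsplit : homogeneousD (n + 2) F (prismSimplex α β l x) =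
      ∑ i ∈ Finset.range l, (-1 : ℤ) ^ i • F (face i (prismSimplex α β l x)) +
        (-1 : ℤ) ^ l • F (splice α β l x) - (-1 : ℤ) ^ l • F (splice α β (l + 1) x) +
        ∑ i ∈ Finset.Ico (l + 1) (n + 2),
          (-1 : ℤ) ^ (i + 1) • F (prismSimplex α β l (face i x)) := by
    rw [homogeneousD_apply, Finset.range_eq_Ico,
      ← Finset.sum_Ico_consecutive _ (Nat.zero_le (l + 2)) (by omega : l + 2 ≤ n + 3),
      ← Finset.range_eq_Ico, Finset.sum_range_succ, Finset.sum_range_succ,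
      face_prismSimplex_self, face_succ_prismSimplex, pow_succ, mul_neg_one, neg_smul,
      ← sub_eq_add_neg, Finset.sum_Ico_eq_sum_range, Finset.sum_Ico_eq_sum_range,
      show n + 3 - (l + 2) = n + 2 - (l + 1) by omega]
    congr 1
    refine Finset.sum_congr rfl fun k hk => ?_
    rw [Finset.mem_range] at hk
    rw [face_prismSimplex_of_gt x (by omega) (by omega), show l + 2 + k - 1 = l + 1 + k by omega,
      show l + 2 + k = l + 1 + k + 1 by omega]
  have hlow : ∀ i ∈ Finset.range l,
      (-1 : ℤ) ^ l • (-1 : ℤ) ^ i • F (face i (prismSimplex α β l x)) =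
        -((-1 : ℤ) ^ (i + (l - 1)) • F (prismSimplex α β (l - 1) (face i x))) := by
    intro i hi
    rw [Finset.mem_range] at hi
    rw [face_prismSimplex_of_lt x hi hl, smul_smul, ← pow_add,
      show l + i = i + (l - 1) + 1 by omega, pow_succ, mul_neg_one, neg_smul]
  have hhigh : ∀ i ∈ Finset.Ico (l + 1) (n + 2),
      (-1 : ℤ) ^ l • (-1 : ℤ) ^ (i + 1) • F (prismSimplex α β l (face i x)) =
        -((-1 : ℤ) ^ (i + l) • F (prismSimplex α β l (face i x))) := by
    intro i _
    rw [smul_smul, ← pow_add, show l + (i + 1) = i + l + 1 by omega, pow_succ, mul_neg_one,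
      neg_smul]
  rw [hsplit, smul_add, smul_sub, smul_add, Finset.smul_sum, Finset.smul_sum,
    Finset.sum_congr rfl hlow, Finset.sum_congr rfl hhigh, smul_smul, smul_smul, ← pow_add,
    Even.neg_one_pow ⟨l, rfl⟩, one_smul, Finset.sum_neg_distrib, Finset.sum_neg_distrib]
  abel

theorem homogeneousD_prismOp_add_prismOp_homogeneousD (F : (Fin (n + 2) → Y) → M)
    (x : Fin (n + 2) → X) :
    homogeneousD (n + 1) (prismOp α β n F) x + prismOp α β (n + 1) (homogeneousD (n + 2) F) x =
      F (β ∘ x) - F (α ∘ x) := by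
  rw [prismOp_apply, Finset.sum_congr rfl fun l hl =>
      neg_one_pow_smul_homogeneousD_prismSimplex F x (by simp at hl; omega),
    Finset.sum_sub_distrib, Finset.sum_sub_distrib, Finset.sum_range_sub',
    splice_zero, splice_of_le x le_rfl, sub_sub, sum_range_sum_lt_add_sum_gt
      (fun l i => (-1 : ℤ) ^ (i + l) • F (prismSimplex α β l (face i x))) (n + 1)]
  simp only [homogeneousD_apply, prismOp_apply, Finset.smul_sum, smul_smul, ← pow_add]
  abel

end Prism

section Homotopy

variable [AddCommGroup M] {X : Type*}

lemma comapCochain_eq_self_of_homogeneousD_eq_zero (B : X → X) {f : (Fin 1 → X) → M}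
    (hf : homogeneousD 1 f = 0) : comapCochain B 1 f = f := by
  funext x
  have h0 : face 0 ![x 0, B (x 0)] = B ∘ x := funext fun k => by fin_cases k; rfl
  have h1 : face 1 ![x 0, B (x 0)] = x := funext fun k => by fin_cases k; rfl
  have h := congrFun hf ![x 0, B (x 0)]
  simp only [homogeneousD_apply, Finset.sum_range_succ, Finset.sum_range_zero, h0, h1] at h
  simpa [comapCochain, ← sub_eq_add_neg, sub_eq_zero] using h

lemma comapCochain_eq_add_homogeneousD_prismOp (B : X → X) {n : ℕ}
    {f : (Fin (n + 2) → X) → M} (hf : homogeneousD (n + 2) f = 0) :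
    comapCochain B (n + 2) f = f + homogeneousD (n + 1) (prismOp id B n f) := by
  funext x
  have h := homogeneousD_prismOp_add_prismOp_homogeneousD (α := id) (β := B) f x
  rw [hf, map_zero, Pi.zero_apply, add_zero] at h
  rw [Pi.add_apply, h]
  exact (add_sub_cancel _ _).symm

variable {Γ Δ : Type*} [Group Γ] [Group Δ] {j : Δ →* Γ} {α β : Γ → Γ}

lemma prismSimplex_smul (hα : ∀ δ g, α (j δ * g) = j δ * α g)
    (hβ : ∀ δ g, β (j δ * g) = j δ * β g) (δ : Δ) {n : ℕ} (l : ℕ) (x : Fin (n + 1) → Γ) :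
    prismSimplex α β l (j δ • x) = j δ • prismSimplex α β l x := by
  funext k
  simp only [prismSimplex, Pi.smul_apply, smul_eq_mul]
  split_ifs
  · exact hα δ _
  · exact hβ δ _

lemma IsEquivariant.prismOp {σ : Δ →* Multiplicative (AddAut M)}
    (hα : ∀ δ g, α (j δ * g) = j δ * α g) (hβ : ∀ δ g, β (j δ * g) = j δ * β g) {n : ℕ}
    {f : (Fin (n + 2) → Γ) → M} (hf : IsEquivariant j σ f) :
    IsEquivariant j σ (prismOp α β n f) := by
  intro δ x
  simp only [prismOp_apply, map_sum, map_zsmul, prismSimplex_smul hα hβ, hf δ]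

end Homotopy

def quotSubtypeHom {G : Type u} [Group G] (H N : Subgroup G) [N.Normal] :
    H ⧸ N.subgroupOf H →* G ⧸ N :=
  QuotientGroup.map (N.subgroupOf H) N H.subtype fun _ h => h

/-- `retraction` turns `Δ`-cochains into `Δ`-equivariant cochains on `Γ`, which the norm over the
coset representatives `rep` then makes `Γ`-equivariant. -/
structure CorestrictionData {Γ Δ : Type u} [Group Γ] [Group Δ] (j : Δ →* Γ) (ι : Type*) where
  rep : ι → Γ
  cosetIndex : Γ → ι
  retraction : Γ → Δ
  exists_eq_rep_mul : ∀ g, ∃ δ, g = rep (cosetIndex g) * j δ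
  cosetIndex_rep_mul : ∀ i δ, cosetIndex (rep i * j δ) = i
  retraction_mul : ∀ δ g, retraction (j δ * g) = δ * retraction g

namespace CorestrictionData

variable {Γ Δ : Type u} [Group Γ] [Group Δ] {j : Δ →* Γ} {ι : Type*} (D : CorestrictionData j ι)

lemma cosetIndex_inv_mul_rep_cosetIndex_mul_rep (g : Γ) (i : ι) :
    D.cosetIndex (g⁻¹ * D.rep (D.cosetIndex (g * D.rep i))) = i := by
  obtain ⟨δ, hδ⟩ := D.exists_eq_rep_mul (g * D.rep i)
  rw [show g⁻¹ * D.rep (D.cosetIndex (g * D.rep i)) = D.rep i * j δ⁻¹ by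
    rw [map_inv, eq_mul_inv_iff_mul_eq, mul_assoc, ← hδ, inv_mul_cancel_left],
    D.cosetIndex_rep_mul]

lemma bijective_cosetIndex_mul_rep (g : Γ) :
    Function.Bijective fun i => D.cosetIndex (g * D.rep i) :=
  Function.bijective_iff_has_inverse.mpr
    ⟨fun i => D.cosetIndex (g⁻¹ * D.rep i), D.cosetIndex_inv_mul_rep_cosetIndex_mul_rep g,
      fun i => by simpa using D.cosetIndex_inv_mul_rep_cosetIndex_mul_rep g⁻¹ i⟩

def map (N : Subgroup Γ) [N.Normal] (L : Subgroup Δ) [L.Normal] (hLN : L ≤ N.comap j)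
    (hc : ∀ a b, a⁻¹ * b ∈ N → D.cosetIndex a = D.cosetIndex b)
    (hκ : ∀ a b, a⁻¹ * b ∈ N → (D.retraction a)⁻¹ * D.retraction b ∈ L) :
    CorestrictionData (QuotientGroup.map L N j hLN) ι where
  rep i := D.rep i
  cosetIndex := Quotient.lift D.cosetIndex fun a b hab =>
    hc a b (QuotientGroup.leftRel_apply.mp hab)
  retraction := Quotient.map' D.retraction fun a b hab =>
    QuotientGroup.leftRel_apply.mpr (hκ a b (QuotientGroup.leftRel_apply.mp hab))
  exists_eq_rep_mul := by
    rintro ⟨g⟩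
    obtain ⟨δ, hδ⟩ := D.exists_eq_rep_mul g
    exact ⟨δ, congrArg QuotientGroup.mk hδ⟩
  cosetIndex_rep_mul := by
    rintro i ⟨δ⟩
    exact D.cosetIndex_rep_mul i δ
  retraction_mul := by
    rintro ⟨δ⟩ ⟨g⟩
    exact congrArg QuotientGroup.mk (D.retraction_mul δ g)

variable {G : Type u} [Group G]

noncomputable def ofSubgroup (H : Subgroup G) : CorestrictionData H.subtype (G ⧸ H) where
  rep := Quotient.out
  cosetIndex := QuotientGroup.mk
  retraction g := ⟨g * ((g⁻¹ : G) : G ⧸ H).out, by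
    obtain ⟨h, hh⟩ := QuotientGroup.mk_out_eq_mul H g⁻¹
    rw [hh, mul_inv_cancel_left]
    exact h.2⟩
  exists_eq_rep_mul g := by
    obtain ⟨h, hh⟩ := QuotientGroup.mk_out_eq_mul H g
    exact ⟨h⁻¹, by simp [hh]⟩
  cosetIndex_rep_mul i δ := by
    rw [Subgroup.subtype_apply, QuotientGroup.mk_mul_of_mem _ δ.2, QuotientGroup.out_eq']
  retraction_mul δ g := by
    ext
    simp only [Subgroup.subtype_apply, Subgroup.coe_mul, mul_inv_rev,
      QuotientGroup.mk_mul_of_mem g⁻¹ (inv_mem δ.2), mul_assoc]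

lemma ofSubgroup_retraction_coe (H : Subgroup G) (g : G) :
    ((ofSubgroup H).retraction g : G) = g * ((g⁻¹ : G) : G ⧸ H).out :=
  rfl

noncomputable def ofSubgroupQuotient (H N : Subgroup G) [N.Normal] (hNH : N ≤ H) :
    CorestrictionData (quotSubtypeHom H N) (G ⧸ H) :=
  (ofSubgroup H).map N (N.subgroupOf H) _
    (fun a b hab => QuotientGroup.eq.mpr (hNH hab))
    (fun a b hab => by
      have hinv : ((a⁻¹ : G) : G ⧸ H) = (b⁻¹ : G) := QuotientGroup.eq.mpr <| hNH <| by
        simpa [mul_assoc] using ‹N.Normal›.conj_mem _ (inv_mem hab) a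
      rw [Subgroup.mem_subgroupOf, Subgroup.coe_mul, Subgroup.coe_inv, ofSubgroup_retraction_coe,
        ofSubgroup_retraction_coe, hinv]
      simpa [mul_assoc] using ‹N.Normal›.conj_mem _ hab ((b⁻¹ : G) : G ⧸ H).out⁻¹)

end CorestrictionData

section Corestriction

variable [AddCommGroup M] {Γ Δ : Type u} [Group Γ] [Group Δ] {ρ : Γ →* Multiplicative (AddAut M)}
  {σ : Δ →* Multiplicative (AddAut M)} {j : Δ →* Γ} {ι : Type*} [Fintype ι]

variable (ρ) in
def normCochain (T : ι → Γ) (n : ℕ) : ((Fin n → Γ) → M) →+ ((Fin n → Γ) → M) :=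
  AddMonoidHom.mk' (fun F x => ∑ i, ρ (T i) (F ((T i)⁻¹ • x)))
    (fun F F' => by funext x; simp [Finset.sum_add_distrib])

lemma homogeneousD_normCochain {T : ι → Γ} {n : ℕ} (F : (Fin n → Γ) → M) :
    homogeneousD n (normCochain ρ T n F) = normCochain ρ T (n + 1) (homogeneousD n F) := by
  funext x
  simp only [homogeneousD_apply, normCochain, AddMonoidHom.mk'_apply, face_smul, map_sum,
    map_zsmul, Finset.smul_sum]
  exact Finset.sum_comm

lemma normCochain_of_isEquivariant {T : ι → Γ} {n : ℕ} {f : (Fin n → Γ) → M}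
    (hf : IsEquivariant (MonoidHom.id Γ) ρ f) : normCochain ρ T n f = Fintype.card ι • f := by
  funext x
  simp [normCochain, hf.map_smul]

lemma IsEquivariant.normCochain (hcomp : ∀ δ, σ δ = ρ (j δ)) (D : CorestrictionData j ι)
    {n : ℕ} {F : (Fin n → Γ) → M} (hF : IsEquivariant j σ F) :
    IsEquivariant (MonoidHom.id Γ) ρ (normCochain ρ D.rep n F) := by
  intro g x
  simp only [GoodProfinite.normCochain, AddMonoidHom.mk'_apply, MonoidHom.id_apply, map_sum]
  rw [← (D.bijective_cosetIndex_mul_rep g).sum_comp]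
  refine Finset.sum_congr rfl fun i _ => ?_
  obtain ⟨δ, hδ⟩ := D.exists_eq_rep_mul (g * D.rep i)
  have hrep : (D.rep (D.cosetIndex (g * D.rep i)))⁻¹ • g • x = j δ • (D.rep i)⁻¹ • x := by
    rw [smul_smul, smul_smul]
    congr 1
    rw [inv_mul_eq_iff_eq_mul, ← mul_assoc, ← hδ, mul_inv_cancel_right]
  rw [hrep, hF, hcomp, ← act_mul, ← act_mul, ← hδ]

lemma comapCochain_normCochain {Γ' : Type u} [Group Γ'] {ρ' : Γ' →* Multiplicative (AddAut M)}
    (π : Γ →* Γ') (hρ : ∀ g, ρ g = ρ' (π g)) (T : ι → Γ) {n : ℕ} (F : (Fin n → Γ') → M) :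
    comapCochain π n (normCochain ρ' (π ∘ T) n F) = normCochain ρ T n (comapCochain π n F) := by
  funext x
  have hx : ∀ i, ((π ∘ T) i)⁻¹ • (π ∘ x) = π ∘ ((T i)⁻¹ • x) := fun i => by
    funext k; simp
  simp only [comapCochain, normCochain, AddMonoidHom.mk'_apply, hx, hρ]
  rfl

variable (ρ σ) in
def coresCochain (D : CorestrictionData j ι) (n : ℕ) :
    ((Fin n → Δ) → M) →+ ((Fin n → Γ) → M) :=
  (dehomogenize n).comp <| (normCochain ρ D.rep (n + 1)).comp <|
    (comapCochain D.retraction (n + 1)).comp (homogenize σ n)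

lemma cochainD_coresCochain (hcomp : ∀ δ, σ δ = ρ (j δ)) (D : CorestrictionData j ι) {n : ℕ}
    (c : (Fin n → Δ) → M) :
    cochainD ρ n (coresCochain ρ σ D n c) = coresCochain ρ σ D (n + 1) (cochainD σ n c) := by
  have hc := ((isEquivariant_homogenize c).comapCochain D.retraction_mul).normCochain hcomp D
  simp only [coresCochain, AddMonoidHom.comp_apply, cochainD_dehomogenize hc,
    homogeneousD_normCochain, homogeneousD_comapCochain, homogenize_cochainD]

lemma coresCochain_precompCochain_sub_mem (hcomp : ∀ δ, σ δ = ρ (j δ))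
    (D : CorestrictionData j ι) {n : ℕ} {c : (Fin n → Γ) → M} (hc : cochainD ρ n c = 0) :
    coresCochain ρ σ D n (precompCochain j n c) - Fintype.card ι • c ∈ coboundaryGroup ρ n := by
  set f := homogenize ρ n c
  have hf : IsEquivariant (MonoidHom.id Γ) ρ f := isEquivariant_homogenize c
  have hdf : homogeneousD (n + 1) f = 0 := by rw [← homogenize_cochainD, hc, map_zero]
  have hcores : coresCochain ρ σ D n (precompCochain j n c) = dehomogenize n
      (normCochain ρ D.rep (n + 1) (comapCochain (j ∘ D.retraction) (n + 1) f)) := by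
    simp only [coresCochain, AddMonoidHom.comp_apply, homogenize_precompCochain hcomp]
    rfl
  rw [hcores]
  cases n with
  | zero =>
    rw [comapCochain_eq_self_of_homogeneousD_eq_zero _ hdf, normCochain_of_isEquivariant hf,
      map_nsmul, dehomogenize_homogenize, sub_self]
    exact zero_mem _
  | succ n =>
    have hjκ : ∀ δ g, (j ∘ D.retraction) (j δ * g) = j δ * (j ∘ D.retraction) g := fun δ g => by
      simp [D.retraction_mul]
    have hprism := ((hf.of_id hcomp).prismOp (α := id) (fun _ _ => rfl) hjκ).normCochain hcomp D
    rw [comapCochain_eq_add_homogeneousD_prismOp _ hdf, map_add, map_add,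
      normCochain_of_isEquivariant hf, ← homogeneousD_normCochain, map_nsmul,
      dehomogenize_homogenize, ← cochainD_dehomogenize hprism, add_sub_cancel_left]
    exact ⟨_, rfl⟩

end Corestriction

section Cohomology

variable [AddCommGroup M] {Γ Δ : Type u} [Group Γ] [Group Δ] {ρ : Γ →* Multiplicative (AddAut M)}
  {σ : Δ →* Multiplicative (AddAut M)}

lemma groupCoh_mk_eq_mk_iff {n : ℕ} (a b : cocycleGroup ρ n) :
    (QuotientAddGroup.mk a : groupCoh ρ n) = QuotientAddGroup.mk b ↔
      (a - b : (Fin n → Γ) → M) ∈ coboundaryGroup ρ n := by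
  rw [QuotientAddGroup.eq, AddSubgroup.mem_addSubgroupOf, ← neg_mem_iff]
  simp [sub_eq_add_neg, add_comm]

lemma groupCoh_nsmul_mk (q : ℕ) {n : ℕ} (z : cocycleGroup ρ n) :
    q • (QuotientAddGroup.mk z : groupCoh ρ n) = QuotientAddGroup.mk (q • z) :=
  (map_nsmul (QuotientAddGroup.mk' _) q z).symm

lemma groupCoh_nsmul_eq_zero {q : ℕ} (hq : ∀ m : M, q • m = 0) {n : ℕ} (x : groupCoh ρ n) :
    q • x = 0 := by
  refine QuotientAddGroup.induction_on x fun z => (groupCoh_nsmul_mk q z).trans ?_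
  rw [show q • z = 0 from Subtype.ext (funext fun g => hq _)]
  rfl

lemma cohMap_cohMap {Γ' : Type u} [Group Γ'] {ρ' : Γ' →* Multiplicative (AddAut M)}
    (f : Δ →* Γ) (g : Γ →* Γ') (h : Δ →* Γ') (hfg : ∀ x, g (f x) = h x)
    (hg : ∀ x, ρ x = ρ' (g x)) (hf : ∀ x, σ x = ρ (f x)) {n : ℕ} (z : groupCoh ρ' n) :
    cohMap f ρ σ hf n (cohMap g ρ' ρ hg n z) =
      cohMap h ρ' σ (fun x => by rw [hf, hg, hfg]) n z := by
  refine QuotientAddGroup.induction_on z fun w => congrArg QuotientAddGroup.mk (Subtype.ext ?_)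
  funext x
  exact congrArg w.1 (funext fun i => hfg (x i))

lemma cohMap_cohMap_eq_cohMap_cohMap {Γ₁ Γ' : Type u} [Group Γ₁] [Group Γ']
    {ρ₁ : Γ₁ →* Multiplicative (AddAut M)} {ρ' : Γ' →* Multiplicative (AddAut M)}
    (f : Δ →* Γ) (g : Γ →* Γ') (f₁ : Δ →* Γ₁) (g₁ : Γ₁ →* Γ') (hfg : ∀ x, g (f x) = g₁ (f₁ x))
    (hg : ∀ x, ρ x = ρ' (g x)) (hf : ∀ x, σ x = ρ (f x)) (hg₁ : ∀ x, ρ₁ x = ρ' (g₁ x))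
    (hf₁ : ∀ x, σ x = ρ₁ (f₁ x)) {n : ℕ} (z : groupCoh ρ' n) :
    cohMap f ρ σ hf n (cohMap g ρ' ρ hg n z) = cohMap f₁ ρ₁ σ hf₁ n (cohMap g₁ ρ' ρ₁ hg₁ n z) := by
  rw [cohMap_cohMap f g (g.comp f) (fun _ => rfl),
    cohMap_cohMap f₁ g₁ (g.comp f) fun x => (hfg x).symm]

def cohMapOfCochainMap (φ : ∀ n, ((Fin n → Δ) → M) →+ ((Fin n → Γ) → M))
    (hφ : ∀ n c, cochainD ρ n (φ n c) = φ (n + 1) (cochainD σ n c)) (n : ℕ) :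
    groupCoh σ n →+ groupCoh ρ n :=
  QuotientAddGroup.map _ _
    (((φ n).comp (cocycleGroup σ n).subtype).codRestrict _ fun c => by
      change cochainD ρ n (φ n c) = 0
      rw [hφ, show cochainD σ n c = 0 from c.2, map_zero])
    (by
      intro c hc
      rw [AddSubgroup.mem_addSubgroupOf] at hc
      rw [AddSubgroup.mem_comap, AddSubgroup.mem_addSubgroupOf]
      change φ n c ∈ coboundaryGroup ρ n
      cases n with
      | zero => rw [show (c : (Fin 0 → Δ) → M) = 0 from hc, map_zero]; exact zero_mem _
      | succ n =>
        obtain ⟨b, hb⟩ := hc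
        exact ⟨φ n b, by rw [hφ, hb]⟩)

variable {j : Δ →* Γ} {ι : Type*} [Fintype ι]

def cores (hcomp : ∀ δ, σ δ = ρ (j δ)) (D : CorestrictionData j ι) (n : ℕ) :
    groupCoh σ n →+ groupCoh ρ n :=
  cohMapOfCochainMap (coresCochain ρ σ D) (fun _ => cochainD_coresCochain hcomp D) n

theorem cores_cohMap (hcomp : ∀ δ, σ δ = ρ (j δ)) (D : CorestrictionData j ι) {n : ℕ}
    (x : groupCoh ρ n) : cores hcomp D n (cohMap j ρ σ hcomp n x) = Fintype.card ι • x := by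
  refine QuotientAddGroup.induction_on x fun z => ?_
  exact ((groupCoh_mk_eq_mk_iff _ _).mpr (coresCochain_precompCochain_sub_mem hcomp D z.2)).trans
    (groupCoh_nsmul_mk _ z).symm

theorem cohMap_cores {Γ' Δ' : Type u} [Group Γ'] [Group Δ'] {ρ' : Γ' →* Multiplicative (AddAut M)}
    {σ' : Δ' →* Multiplicative (AddAut M)} {j' : Δ' →* Γ'} (πΓ : Γ →* Γ') (πΔ : Δ →* Δ')
    (hρ : ∀ g, ρ g = ρ' (πΓ g)) (hσ : ∀ δ, σ δ = σ' (πΔ δ)) (hcomp : ∀ δ, σ δ = ρ (j δ))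
    (hcomp' : ∀ δ, σ' δ = ρ' (j' δ)) (D : CorestrictionData j ι) (D' : CorestrictionData j' ι)
    (hrep : D'.rep = πΓ ∘ D.rep) (hret : D'.retraction ∘ πΓ = πΔ ∘ D.retraction) {n : ℕ}
    (z : groupCoh σ' n) :
    cohMap πΓ ρ' ρ hρ n (cores hcomp' D' n z) = cores hcomp D n (cohMap πΔ σ' σ hσ n z) := by
  refine QuotientAddGroup.induction_on z fun w => congrArg QuotientAddGroup.mk (Subtype.ext ?_)
  change precompCochain πΓ n (coresCochain ρ' σ' D' n w) =
    coresCochain ρ σ D n (precompCochain πΔ n w)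
  simp only [coresCochain, AddMonoidHom.comp_apply, ← dehomogenize_comapCochain, hrep,
    comapCochain_normCochain πΓ hρ, homogenize_precompCochain hσ]
  rw [comapCochain_comapCochain, comapCochain_comapCochain, hret]

end Cohomology

section GroupTheory

variable {G : Type u} [Group G]

lemma exists_le_coprime_index_relIndex_eq_pow (p : ℕ) [Fact p.Prime] (N : Subgroup G) [N.Normal]
    [N.FiniteIndex] :
    ∃ H : Subgroup G, N ≤ H ∧ H.FiniteIndex ∧ H.index.Coprime p ∧ ∃ m, N.relIndex H = p ^ m := by
  obtain ⟨P⟩ : Nonempty (Sylow p (G ⧸ N)) := inferInstance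
  set H := P.comap (QuotientGroup.mk' N)
  have hNH : N ≤ H := fun g hg => by simp [H, (QuotientGroup.eq_one_iff g).mpr hg]
  have hindex : H.index = P.index :=
    Subgroup.index_comap_of_surjective _ (QuotientGroup.mk'_surjective N)
  have hP : P.index ≠ 0 := Subgroup.index_ne_zero_of_finite
  obtain ⟨m, hm⟩ := IsPGroup.iff_card.mp P.isPGroup'
  refine ⟨H, hNH, ⟨hindex ▸ hP⟩, ?_, m, ?_⟩
  · rw [hindex]
    exact ((Nat.Prime.coprime_iff_not_dvd Fact.out).mpr P.not_dvd_index).symm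
  · have h := Subgroup.relIndex_mul_index hNH
    rw [hindex, N.index_eq_card, ← (P : Subgroup (G ⧸ N)).card_mul_index, hm] at h
    exact Nat.eq_of_mul_eq_mul_right (Nat.pos_of_ne_zero hP) h

lemma exists_normal_le_subgroupOf_le (H N : Subgroup G) [H.FiniteIndex] [N.Normal] [N.FiniteIndex]
    (K : Subgroup H) [K.FiniteIndex] :
    ∃ N₀ : Subgroup G, N₀.Normal ∧ N₀.FiniteIndex ∧ N₀ ≤ N ∧ N₀ ≤ H ∧ N₀.subgroupOf H ≤ K := by
  have : (K.map H.subtype).FiniteIndex := Subgroup.finiteIndex_iff.mpr <| by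
    rw [Subgroup.index_map_subtype]
    exact mul_ne_zero Subgroup.FiniteIndex.index_ne_zero Subgroup.FiniteIndex.index_ne_zero
  have hcore : (K.map H.subtype).normalCore ≤ H :=
    (Subgroup.normalCore_le _).trans (Subgroup.map_subtype_le K)
  refine ⟨(K.map H.subtype).normalCore ⊓ N, inferInstance, inferInstance, inf_le_right,
    inf_le_left.trans hcore, fun y hy => ?_⟩
  obtain ⟨w, hw, hwy⟩ := Subgroup.normalCore_le _ (Subgroup.mem_subgroupOf.mp hy).1
  rwa [← Subtype.ext hwy]

end GroupTheory

lemma exists_zsmul_nsmul_eq_self (A : Type*) [AddCommGroup A] {d q : ℕ} (h : d.Coprime q) :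
    ∃ a : ℤ, ∀ x : A, q • x = 0 → a • d • x = x := by
  obtain ⟨a, b, hab⟩ := Nat.isCoprime_iff_coprime.mpr h
  refine ⟨a, fun x hx => ?_⟩
  calc a • d • x = (a * d + b * q) • x - b • q • x := by
        rw [add_zsmul, mul_zsmul, mul_zsmul, natCast_zsmul, natCast_zsmul, add_sub_cancel_right]
    _ = x := by rw [hab, one_zsmul, hx, smul_zero, sub_zero]

section Transfer

variable [AddCommGroup M] {G : Type u} [Group G] {ρ : G →* Multiplicative (AddAut M)}
  {H N : Subgroup G} [N.Normal] (h1 : ∀ g ∈ N, ρ g = 1)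

lemma quotAut_quotSubtypeHom (δ : H ⧸ N.subgroupOf H) :
    quotAut (ρ.comp H.subtype) (N.subgroupOf H) (fun y hy => h1 y hy) δ =
      quotAut ρ N h1 (quotSubtypeHom H N δ) :=
  QuotientGroup.induction_on δ fun _ => rfl

variable [H.FiniteIndex] (hNH : N ≤ H) {q : ℕ} (hcop : H.index.Coprime q)
  (hq : ∀ m : M, q • m = 0)

include hNH hcop hq in
lemma exists_cohMap_mk_eq_of_cohMap_mk_eq_cohMap_subtype {n : ℕ} (x : groupCoh ρ n)
    (z : groupCoh (quotAut (ρ.comp H.subtype) (N.subgroupOf H) fun y hy => h1 y hy) n)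
    (hz : cohMap (QuotientGroup.mk' _) _ _ (fun _ => rfl) n z =
      cohMap H.subtype ρ (ρ.comp H.subtype) (fun _ => rfl) n x) :
    ∃ w : groupCoh (quotAut ρ N h1) n,
      cohMap (QuotientGroup.mk' N) (quotAut ρ N h1) ρ (fun _ => rfl) n w = x := by
  let _ : Fintype (G ⧸ H) := Fintype.ofFinite _
  obtain ⟨a, ha⟩ := exists_zsmul_nsmul_eq_self (groupCoh ρ n) hcop
  refine ⟨a • cores (quotAut_quotSubtypeHom h1) (CorestrictionData.ofSubgroupQuotient H N hNH) n z,
    ?_⟩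
  rw [map_zsmul, cohMap_cores (σ := ρ.comp H.subtype) _ (QuotientGroup.mk' _) (fun _ => rfl)
    (fun _ => rfl) (fun _ => rfl) _ (CorestrictionData.ofSubgroup H) _ rfl rfl, hz, cores_cohMap,
    ← Nat.card_eq_fintype_card, ← Subgroup.index_eq_card, ha x (groupCoh_nsmul_eq_zero hq x)]

include hNH hcop hq in
lemma eq_zero_of_cohMap_quotSubtypeHom_eq_zero {n : ℕ} (w : groupCoh (quotAut ρ N h1) n)
    (hw : cohMap (quotSubtypeHom H N) (quotAut ρ N h1) _ (quotAut_quotSubtypeHom h1) n w = 0) :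
    w = 0 := by
  let _ : Fintype (G ⧸ H) := Fintype.ofFinite _
  obtain ⟨a, ha⟩ := exists_zsmul_nsmul_eq_self (groupCoh (quotAut ρ N h1) n) hcop
  refine (ha w (groupCoh_nsmul_eq_zero hq w)).symm.trans ?_
  rw [Subgroup.index_eq_card, Nat.card_eq_fintype_card,
    ← cores_cohMap (quotAut_quotSubtypeHom h1) (CorestrictionData.ofSubgroupQuotient H N hNH), hw,
    map_zero, smul_zero]

end Transfer

section Weigel

variable {p : ℕ} [Fact p.Prime] {G : Type u} [Group G] {A : Type u} [AddCommGroup A]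
  {ρ : G →* Multiplicative (AddAut A)} {k : ℕ}

lemma exists_cohMap_mk_eq (hG : ∀ H : Subgroup G, H.FiniteIndex → InGp p H)
    (hk : Nat.card A = p ^ k) (N : Subgroup G) [N.Normal] [N.FiniteIndex]
    (h1 : ∀ y ∈ N, ρ y = 1) {n : ℕ} (x : groupCoh ρ n) :
    ∃ (N₀ : Subgroup G) (hN₀ : N₀.Normal),
      haveI := hN₀
      ∃ (_ : N₀.FiniteIndex) (h1 : ∀ y ∈ N₀, ρ y = 1) (z : groupCoh (quotAut ρ N₀ h1) n),
        cohMap (QuotientGroup.mk' N₀) (quotAut ρ N₀ h1) ρ (fun _ => rfl) n z = x := by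
  obtain ⟨H, hNH, hH, hcop, m, hm⟩ := exists_le_coprime_index_relIndex_eq_pow p N
  obtain ⟨K, hK, ⟨m', hm'⟩, h1K, z, hz⟩ := (hG H hH A (ρ.comp H.subtype) ⟨k, hk⟩
    ⟨N.subgroupOf H, inferInstance, ⟨m, hm⟩, fun y hy => h1 y hy⟩ n).1
    (cohMap H.subtype ρ _ (fun _ => rfl) n x)
  have : K.FiniteIndex := ⟨by rw [hm']; exact pow_ne_zero _ (Fact.out : p.Prime).ne_zero⟩
  obtain ⟨N₀, hN₀, hN₀f, hN₀N, hN₀H, hLK⟩ := exists_normal_le_subgroupOf_le H N K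
  have h1₀ : ∀ y ∈ N₀, ρ y = 1 := fun y hy => h1 y (hN₀N hy)
  obtain ⟨w, hw⟩ := exists_cohMap_mk_eq_of_cohMap_mk_eq_cohMap_subtype h1₀ hN₀H
    (hcop.pow_right k) (fun a => hk ▸ card_nsmul_eq_zero') x
    (cohMap (quotMapHom K _ hLK) _ _ (quotAut_comp_quotMap _ K _ hLK h1K) n z)
    ((cohMap_cohMap _ _ (QuotientGroup.mk' K) (fun _ => rfl) _ _ z).trans hz)
  exact ⟨N₀, hN₀, hN₀f, h1₀, w, hw⟩

lemma exists_cohMap_quotMapHom_eq_zero (hG : ∀ H : Subgroup G, H.FiniteIndex → InGp p H)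
    (hk : Nat.card A = p ^ k) (N : Subgroup G) [N.Normal] [N.FiniteIndex]
    (h1 : ∀ y ∈ N, ρ y = 1) {n : ℕ} (z : groupCoh (quotAut ρ N h1) n)
    (hz : cohMap (QuotientGroup.mk' N) (quotAut ρ N h1) ρ (fun _ => rfl) n z = 0) :
    ∃ (N₀ : Subgroup G) (hN₀ : N₀.Normal),
      haveI := hN₀
      ∃ (_ : N₀.FiniteIndex) (hle : N₀ ≤ N),
        cohMap (quotMapHom N N₀ hle) (quotAut ρ N h1) (quotAut ρ N₀ fun g hg => h1 g (hle hg))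
          (quotAut_comp_quotMap ρ N N₀ hle h1) n z = 0 := by
  obtain ⟨H, hNH, hH, hcop, m, hm⟩ := exists_le_coprime_index_relIndex_eq_pow p N
  have h1L : ∀ y ∈ N.subgroupOf H, ρ.comp H.subtype y = 1 := fun y hy => h1 y hy
  have hres : cohMap (QuotientGroup.mk' _) _ (ρ.comp H.subtype) (fun _ => rfl) n
      (cohMap (quotSubtypeHom H N) _ _ (quotAut_quotSubtypeHom h1) n z) = 0 := by
    refine (cohMap_cohMap_eq_cohMap_cohMap (ρ := quotAut (ρ.comp H.subtype) _ h1L)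
      (ρ' := quotAut ρ N h1) (ρ₁ := ρ) _ _ H.subtype
      (QuotientGroup.mk' N) (fun _ => rfl) _ _ (fun _ => rfl) (fun _ => rfl) z).trans ?_
    rw [hz, map_zero]
  obtain ⟨K, hK, ⟨m', hm'⟩, hKL, hvan⟩ := (hG H hH A (ρ.comp H.subtype) ⟨k, hk⟩
    ⟨N.subgroupOf H, inferInstance, ⟨m, hm⟩, h1L⟩ n).2 _ inferInstance ⟨m, hm⟩ h1L _ hres
  have : K.FiniteIndex := ⟨by rw [hm']; exact pow_ne_zero _ (Fact.out : p.Prime).ne_zero⟩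
  obtain ⟨N₀, hN₀, hN₀f, hN₀N, hN₀H, hLK⟩ := exists_normal_le_subgroupOf_le H N K
  refine ⟨N₀, hN₀, hN₀f, hN₀N, eq_zero_of_cohMap_quotSubtypeHom_eq_zero _ hN₀H (hcop.pow_right k)
    (fun a => hk ▸ card_nsmul_eq_zero') _ ?_⟩
  -- both routes `H ⧸ (N₀ ⊓ H) → G ⧸ N`, through `G ⧸ N₀` or through `H ⧸ K`, come from `H ≤ G`
  refine (cohMap_cohMap_eq_cohMap_cohMap (ρ := quotAut ρ N₀ fun g hg => h1 g (hN₀N hg))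
    (ρ' := quotAut ρ N h1)
    (ρ₁ := quotAut (ρ.comp H.subtype) K fun g hg => h1L g (hKL hg)) _ _ (quotMapHom K _ hLK)
    ((quotSubtypeHom H N).comp (quotMapHom _ K hKL))
    (fun x => QuotientGroup.induction_on x fun _ => rfl) _ _
    (fun x => QuotientGroup.induction_on x fun _ => rfl)
    (quotAut_comp_quotMap _ K _ hLK fun g hg => h1L g (hKL hg)) z).trans ?_
  rw [← cohMap_cohMap (quotMapHom _ K hKL) (quotSubtypeHom H N) _ (fun _ => rfl)
    (quotAut_quotSubtypeHom h1) (quotAut_comp_quotMap _ _ K hKL h1L), hvan, map_zero]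

end Weigel

/-- Lemma 2.2 (Weigel): if every subgroup of finite index in `G` belongs to `𝒢(p)`, then
`G` belongs to `𝒢*(p)`. -/
theorem weigel_mem_GpStar (p : ℕ) (hp : p.Prime) (G : Type u) [Group G]
    (h : ∀ H : Subgroup G, H.FiniteIndex → InGp p H) : InGpStar p G := by
  have : Fact p.Prime := ⟨hp⟩
  rintro M _ ρ ⟨k, hk⟩ ⟨N, hN, hNf, h1⟩ n
  exact ⟨fun x => exists_cohMap_mk_eq h hk N h1 x,
    fun N₁ _ _ h1₁ z hz => exists_cohMap_quotMapHom_eq_zero h hk N₁ h1₁ z hz⟩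

end GoodProfinite
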